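/- arXiv:math/0608686 — 2 statements merged into one kernel-verified Lean document; each statement's English description precedes it below -/
import Mathlib

section
/- Let (X,d) be a pointed discrete metric space and m ≥ 0. If the sphere S^m is a Lipschitz extensor of X, then every norm-preserving Lipschitz function f : A → ℝ^{m+1}, A ⊂ X, extends to a norm-preserving Lipschitz function f' : X → ℝ^{m+1}. -/
/-- A function between metric spaces is *Lipschitz* if it is `λ`-Lipschitz for some `λ ≥ 0`. -/
def LipFun {X Y : Type*} [MetricSpace X] [MetricSpace Y] (f : X → Y) : Prop :=
  ∃ lam : ℝ, 0 ≤ lam ∧ ∀ x y, dist (f x) (f y) ≤ lam * dist x y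

/-!
We look for the extension in the form `F x = |x| • u x` with `u` sphere-valued; `F` is Lipschitz
as soon as `|y| ‖u x - u y‖ ≤ K d(x, y)` whenever `|y| ≤ |x|` and `4 d(x, y) < |x|`.
On `A`, `u` must be the direction `f a / |a|`, which is `O(1/s)`-Lipschitz where `|a| ≥ s`.
So at each scale `100 ^ j` the extensor hypothesis gives a sphere-valued map `v j` which is
`O(100 ^ -j)`-Lipschitz and equals the direction on `A` at norms `≥ 100 ^ j`: at even scales by
extending the direction itself, at odd scales by extending a map that agrees with the neighbouring
even scales near `100 ^ j` and `100 ^ (j + 1)`. Thus consecutive maps agree near each `100 ^ j`,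
and `u x := v j x` for `100 ^ j ≤ |x| < 100 ^ (j + 1)` satisfies the bound above.
-/

open Set NormedSpace

section Vectors

variable {E : Type*} [NormedAddCommGroup E] [NormedSpace ℝ E]

lemma norm_smul_sub_smul_le (r t : ℝ) (p q : E) :
    ‖r • p - t • q‖ ≤ |r| * ‖p - q‖ + |r - t| * ‖q‖ := by
  have h : r • p - t • q = r • (p - q) + (r - t) • q := by
    rw [sub_smul, smul_sub]; abel
  rw [h, ← Real.norm_eq_abs, ← Real.norm_eq_abs, ← norm_smul, ← norm_smul]
  exact norm_add_le _ _

lemma norm_normalize_sub_normalize_le_of_norm_le {p q : E} (hp : p ≠ 0) (hqp : ‖q‖ ≤ ‖p‖) :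
    ‖normalize p - normalize q‖ ≤ 2 * ‖p - q‖ / ‖p‖ := by
  have hp' : 0 < ‖p‖ := norm_pos_iff.mpr hp
  have hrescale : |‖p‖⁻¹ - ‖q‖⁻¹| * ‖q‖ ≤ (‖p‖ - ‖q‖) / ‖p‖ := by
    rcases (norm_nonneg q).eq_or_lt with hq | hq
    · rw [← hq, mul_zero, sub_zero]; positivity
    rw [abs_of_nonpos (sub_nonpos.mpr (inv_anti₀ hq hqp))]
    field_simp
    linarith
  calc ‖normalize p - normalize q‖
      ≤ |‖p‖⁻¹| * ‖p - q‖ + |‖p‖⁻¹ - ‖q‖⁻¹| * ‖q‖ := norm_smul_sub_smul_le _ _ _ _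
    _ ≤ ‖p - q‖ / ‖p‖ + ‖p - q‖ / ‖p‖ := by
      rw [abs_inv, abs_norm, inv_mul_eq_div]
      gcongr
      exact hrescale.trans (by gcongr; exact norm_sub_norm_le p q)
    _ = 2 * ‖p - q‖ / ‖p‖ := by ring

lemma dist_normalize_normalize_le {p q : E} {s : ℝ} (hs : 0 < s) (hp : s ≤ ‖p‖) :
    dist (normalize p) (normalize q) ≤ 2 / s * dist p q := by
  rw [dist_eq_norm, dist_eq_norm, div_mul_eq_mul_div]
  rcases le_total ‖q‖ ‖p‖ with hqp | hpq
  · refine (norm_normalize_sub_normalize_le_of_norm_le ?_ hqp).trans ?_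
    · exact norm_pos_iff.mp (hs.trans_le hp)
    · gcongr
  · rw [norm_sub_rev, norm_sub_rev p]
    refine (norm_normalize_sub_normalize_le_of_norm_le ?_ hpq).trans ?_
    · exact norm_pos_iff.mp (hs.trans_le (hp.trans hpq))
    · gcongr; exact hp.trans hpq

end Vectors

lemma dist_le_two_of_norm_eq_one {E : Type*} [SeminormedAddCommGroup E] {p q : E}
    (hp : ‖p‖ = 1) (hq : ‖q‖ = 1) : dist p q ≤ 2 := by
  rw [dist_eq_norm]
  linarith [norm_sub_le p q]

lemma dist_le_mul_of_forall_near {X Y ι : Type*} [PseudoMetricSpace X] [PseudoMetricSpace Y]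
    {S : Set X} {u : X → Y} {g : ι → X → Y} {L δ D : ℝ} (hL : 0 ≤ L) (hD : D ≤ L * δ)
    (hu : ∀ x ∈ S, ∀ y ∈ S, dist (u x) (u y) ≤ D)
    (hg : ∀ i x y, dist (g i x) (g i y) ≤ L * dist x y)
    (hnear : ∀ x ∈ S, ∀ y ∈ S, dist x y < δ → ∃ i, u x = g i x ∧ u y = g i y) :
    ∀ x ∈ S, ∀ y ∈ S, dist (u x) (u y) ≤ L * dist x y := by
  intro x hx y hy
  by_cases hxy : dist x y < δ
  · obtain ⟨i, hix, hiy⟩ := hnear x hx y hy hxy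
    rw [hix, hiy]
    exact hg i x y
  · calc dist (u x) (u y) ≤ D := hu x hx y hy
      _ ≤ L * δ := hD
      _ ≤ L * dist x y := by gcongr; exact not_lt.mp hxy

lemma lipFun_smul_of_dist_le {X E : Type*} [MetricSpace X] [NormedAddCommGroup E]
    [NormedSpace ℝ E] (x₀ : X) {u : X → E} {K : ℝ} (hu : ∀ x, ‖u x‖ = 1)
    (h : ∀ x y, dist y x₀ ≤ dist x x₀ → 4 * dist x y < dist x x₀ →
      dist y x₀ * dist (u x) (u y) ≤ K * dist x y) :
    LipFun (fun x => dist x x₀ • u x) := by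
  have key : ∀ x y, dist y x₀ ≤ dist x x₀ →
      dist (dist x x₀ • u x) (dist y x₀ • u y) ≤ (1 + max K 8) * dist x y := by
    intro x y hyx
    have hnear : dist y x₀ * dist (u x) (u y) ≤ max K 8 * dist x y := by
      by_cases hxy : 4 * dist x y < dist x x₀
      · exact (h x y hyx hxy).trans (by gcongr; exact le_max_left _ _)
      · calc dist y x₀ * dist (u x) (u y) ≤ dist x x₀ * 2 :=
              mul_le_mul hyx (dist_le_two_of_norm_eq_one (hu x) (hu y)) dist_nonneg dist_nonneg
          _ ≤ 8 * dist x y := by linarith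
          _ ≤ max K 8 * dist x y := by gcongr; exact le_max_right _ _
    have hnorm : dist x x₀ - dist y x₀ ≤ dist x y := by linarith [dist_triangle x y x₀]
    rw [dist_comm, dist_eq_norm]
    refine (norm_smul_sub_smul_le _ _ _ _).trans ?_
    rw [abs_of_nonneg dist_nonneg, abs_sub_comm, abs_of_nonneg (by linarith), hu x,
      ← dist_eq_norm, dist_comm (u y)]
    linarith
  refine ⟨1 + max K 8, by positivity, fun x y => ?_⟩
  rcases le_total (dist y x₀) (dist x x₀) with hyx | hxy
  · exact key x y hyx
  · rw [dist_comm, dist_comm x]; exact key y x hxy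

lemma exists_direction {X E : Type*} [PseudoMetricSpace X] [NormedAddCommGroup E]
    [NormedSpace ℝ E] (x₀ : X) {A : Set X} {f : A → E} {lam : ℝ}
    (hnorm : ∀ a : A, ‖f a‖ = dist (a : X) x₀) (hf : ∀ a b, dist (f a) (f b) ≤ lam * dist a b) :
    ∃ ψ : X → E, (∀ x ∈ A, 0 < dist x x₀ → ‖ψ x‖ = 1) ∧
      (∀ s > (0 : ℝ), ∀ x ∈ A, ∀ y ∈ A, s ≤ dist x x₀ → s ≤ dist y x₀ →
        dist (ψ x) (ψ y) ≤ 2 * lam / s * dist x y) ∧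
      ∀ a : A, dist (a : X) x₀ • ψ a = f a := by
  classical
  set φ : X → E := fun x => if h : x ∈ A then f ⟨x, h⟩ else 0
  have hφ : ∀ a : A, φ a = f a := fun a => dif_pos a.2
  have hφn : ∀ x ∈ A, ‖φ x‖ = dist x x₀ := fun x hx => (hφ ⟨x, hx⟩).symm ▸ hnorm ⟨x, hx⟩
  refine ⟨fun x => normalize (φ x),
    fun x hx hx₀ => norm_normalize (norm_pos_iff.mp ((hφn x hx).symm ▸ hx₀)),
    fun s hs x hx y hy hsx _ => ?_, fun a => ?_⟩
  · calc dist (normalize (φ x)) (normalize (φ y)) ≤ 2 / s * dist (φ x) (φ y) :=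
          dist_normalize_normalize_le hs ((hφn x hx).symm ▸ hsx)
      _ ≤ 2 / s * (lam * dist x y) := by
          gcongr
          simpa only [← hφ, Subtype.dist_eq] using hf ⟨x, hx⟩ ⟨y, hy⟩
      _ = 2 * lam / s * dist x y := by ring
  · rw [← hφn a a.2, norm_smul_normalize, hφ]

section SphereExtensor

variable {X : Type*} [PseudoMetricSpace X] {E : Type*} [NormedAddCommGroup E]

variable (X E) in
def SphereLipExtensor (C : ℝ) : Prop :=
  ∀ L > (0 : ℝ), ∀ (S : Set X) (g : X → E), (∀ x ∈ S, ‖g x‖ = 1) →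
    (∀ x ∈ S, ∀ y ∈ S, dist (g x) (g y) ≤ L * dist x y) →
    ∃ G : X → E, (∀ x, ‖G x‖ = 1) ∧ EqOn G g S ∧ ∀ x y, dist (G x) (G y) ≤ C * L * dist x y

lemma SphereLipExtensor.of_sphere {C : ℝ}
    (h : ∀ L > (0 : ℝ), ∀ (S : Set X) (u : S → Metric.sphere (0 : E) 1),
      (∀ x y : S, dist (u x) (u y) ≤ L * dist (x : X) (y : X)) →
      ∃ v : X → Metric.sphere (0 : E) 1,
        (∀ x : S, v (x : X) = u x) ∧ ∀ x y : X, dist (v x) (v y) ≤ C * L * dist x y) :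
    SphereLipExtensor X E C := by
  intro L hL S g hg hgL
  obtain ⟨v, hvS, hvL⟩ := h L hL S (fun x => ⟨g x, mem_sphere_zero_iff_norm.mpr (hg x x.2)⟩)
    (fun x y => hgL x x.2 y y.2)
  exact ⟨fun x => v x, fun x => mem_sphere_zero_iff_norm.mp (v x).2,
    fun x hx => congrArg Subtype.val (hvS ⟨x, hx⟩), hvL⟩

lemma SphereLipExtensor.mono {C C' : ℝ} (hX : SphereLipExtensor X E C) (hCC' : C ≤ C') :
    SphereLipExtensor X E C' := by
  intro L hL S g hg hgL
  obtain ⟨G, hG, hGg, hGL⟩ := hX L hL S g hg hgL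
  exact ⟨G, hG, hGg, fun x y => (hGL x y).trans (by gcongr)⟩

variable (x₀ : X)

lemma SphereLipExtensor.exists_glue {C : ℝ} (hX : SphereLipExtensor X E C)
    {g₁ g₂ : X → E} {T : Set X} {L a b : ℝ} (hL : 0 < L) (hab : 2 ≤ L * (b - a))
    (hg₁ : ∀ x, ‖g₁ x‖ = 1) (hg₂ : ∀ x, ‖g₂ x‖ = 1)
    (hg₁L : ∀ x y, dist (g₁ x) (g₁ y) ≤ L * dist x y)
    (hg₂L : ∀ x y, dist (g₂ x) (g₂ y) ≤ L * dist x y) (hT : EqOn g₁ g₂ T) :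
    ∃ G : X → E, (∀ x, ‖G x‖ = 1) ∧ EqOn G g₁ ({x | dist x x₀ < a} ∪ T) ∧
      EqOn G g₂ {x | b ≤ dist x x₀} ∧ ∀ x y, dist (G x) (G y) ≤ C * L * dist x y := by
  have hab' : a < b := by
    by_contra! h
    nlinarith
  set g : X → E := fun x => if dist x x₀ < a then g₁ x else g₂ x with hg_def
  set S : Set X := {x | dist x x₀ < a} ∪ {x | b ≤ dist x x₀} ∪ T
  have hg : ∀ x, ‖g x‖ = 1 := fun x => by
    simp only [hg_def]; split_ifs
    exacts [hg₁ x, hg₂ x]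
  -- A close pair straddling `a` has its upper point in `T`, where `g₁ = g₂`.
  have hnear : ∀ x ∈ S, ∀ y ∈ S, dist x y < b - a →
      ∃ i, g x = ![g₁, g₂] i x ∧ g y = ![g₁, g₂] i y := by
    have hgap : ∀ x y, dist x x₀ < a → b ≤ dist y x₀ → b - a ≤ dist x y := fun x y hx hy => by
      linarith [dist_triangle y x x₀, dist_comm x y]
    intro x hx y hy hxy
    by_cases hxa : dist x x₀ < a <;> by_cases hya : dist y x₀ < a
    · exact ⟨0, by simp [hg_def, hxa, hya]⟩
    · have hyT : y ∈ T := by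
        rcases hy with (hy | hy) | hy
        exacts [absurd hy hya, absurd (hgap x y hxa hy) hxy.not_ge, hy]
      exact ⟨0, by simp [hg_def, hxa, hya, hT hyT]⟩
    · have hxT : x ∈ T := by
        rcases hx with (hx | hx) | hx
        exacts [absurd hx hxa, absurd (dist_comm x y ▸ hgap y x hya hx) hxy.not_ge, hx]
      exact ⟨0, by simp [hg_def, hxa, hya, hT hxT]⟩
    · exact ⟨1, by simp [hg_def, hxa, hya]⟩
  have hgL : ∀ x ∈ S, ∀ y ∈ S, dist (g x) (g y) ≤ L * dist x y :=
    dist_le_mul_of_forall_near hL.le hab (fun x _ y _ => dist_le_two_of_norm_eq_one (hg x) (hg y))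
      (by simpa [Fin.forall_fin_two] using ⟨hg₁L, hg₂L⟩) hnear
  obtain ⟨G, hG, hGg, hGL⟩ := hX L hL S g (fun x _ => hg x) hgL
  refine ⟨G, hG, ?_, fun x hx => ?_, hGL⟩
  · rintro x (hx | hx)
    · rw [hGg (Or.inl (Or.inl hx))]; simp [hg_def, show dist x x₀ < a from hx]
    · rw [hGg (Or.inr hx)]; by_cases hxa : dist x x₀ < a <;> simp [hg_def, hxa, hT hx]
  · rw [hGg (Or.inl (Or.inr hx))]
    simp [hg_def, not_lt.mpr (hab'.le.trans (show b ≤ dist x x₀ from hx))]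

structure IsScaleFamily (K : ℝ) (v : ℤ → X → E) : Prop where
  norm_eq_one : ∀ j x, ‖v j x‖ = 1
  dist_le : ∀ j x y, dist (v j x) (v j y) ≤ K / 100 ^ j * dist x y
  eq_succ : ∀ j x, (100 : ℝ) ^ (j + 1) / 2 ≤ dist x x₀ → dist x x₀ < 2 * 100 ^ (j + 1) →
    v j x = v (j + 1) x

lemma SphereLipExtensor.exists_isScaleFamily {C K : ℝ} (hX : SphereLipExtensor X E C)
    (hC : 1 ≤ C) (hK : 1 ≤ K) {A : Set X} {ψ : X → E} (hψ : ∀ x ∈ A, 0 < dist x x₀ → ‖ψ x‖ = 1)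
    (hψL : ∀ s > (0 : ℝ), ∀ x ∈ A, ∀ y ∈ A, s ≤ dist x x₀ → s ≤ dist y x₀ →
      dist (ψ x) (ψ y) ≤ K / s * dist x y) :
    ∃ v, IsScaleFamily x₀ (10 ^ 4 * C ^ 2 * K) v ∧
      ∀ j, ∀ x ∈ A, (100 : ℝ) ^ j ≤ dist x x₀ → v j x = ψ x := by
  have hW : ∀ s > (0 : ℝ), ∃ G : X → E, (∀ x, ‖G x‖ = 1) ∧
      EqOn G ψ {x | x ∈ A ∧ s ≤ dist x x₀} ∧ ∀ x y, dist (G x) (G y) ≤ C * (K / s) * dist x y :=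
    fun s hs => hX _ (by positivity) _ ψ
      (fun x hx => hψ x hx.1 (hs.trans_le hx.2))
      (fun x hx y hy => hψL s hs x hx.1 y hy.1 hx.2 hy.2)
  choose! W hW hWψ hWL using hW
  have hV : ∀ ρ > (0 : ℝ), ∃ G : X → E, (∀ x, ‖G x‖ = 1) ∧
      EqOn G (W (ρ / 10 ^ 4)) ({x | dist x x₀ < 2 * ρ} ∪ {x | x ∈ A ∧ ρ ≤ dist x x₀}) ∧
      EqOn G (W ρ) {x | 100 * ρ / 2 ≤ dist x x₀} ∧
      ∀ x y, dist (G x) (G y) ≤ C * (10 ^ 4 * C * K / ρ) * dist x y := by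
    intro ρ hρ
    have hρ' : 0 < ρ / 10 ^ 4 := by positivity
    refine hX.exists_glue x₀ (by positivity) ?_ (hW _ hρ') (hW _ hρ) ?_ ?_ ?_
    · rw [div_mul_eq_mul_div, le_div_iff₀ hρ]
      nlinarith [one_le_mul_of_one_le_of_one_le hC hK]
    · intro x y
      convert hWL _ hρ' x y using 2; field_simp
    · intro x y
      have hCK : C * (K / ρ) ≤ 10 ^ 4 * C * K / ρ := by
        rw [mul_div_assoc']; gcongr; nlinarith
      exact (hWL _ hρ x y).trans (by gcongr)
    · intro x hx
      rw [hWψ _ hρ' ⟨hx.1, le_trans (by linarith) hx.2⟩, hWψ _ hρ hx]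
  choose! V hV hVW hVW' hVL using hV
  have h100 : ∀ j : ℤ, (100 : ℝ) ^ (j + 1) = 100 * 100 ^ j := fun j => by
    rw [zpow_add_one₀ (by norm_num), mul_comm]
  have hpos : ∀ j : ℤ, (0 : ℝ) < 100 ^ j := fun j => by positivity
  -- Alternating between `W` and `V` makes consecutive scales agree around `100 ^ (j + 1)`.
  refine ⟨fun j => if Even j then W (100 ^ j / 100) else V (100 ^ j),
    ⟨fun j x => ?_, fun j x y => ?_, fun j x hx₁ hx₂ => ?_⟩, fun j x hx hjx => ?_⟩
  · split_ifs
    exacts [hW _ (by positivity) x, hV _ (hpos j) x]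
  · split_ifs
    · refine (hWL _ (by positivity) x y).trans ?_
      have hCK : C * (K / (100 ^ j / 100)) ≤ 10 ^ 4 * C ^ 2 * K / 100 ^ j := by
        rw [div_div_eq_mul_div, mul_div_assoc', div_le_div_iff_of_pos_right (hpos j)]
        nlinarith [mul_le_mul_of_nonneg_right hC (by positivity : (0 : ℝ) ≤ C * K)]
      gcongr
    · exact (hVL _ (hpos j) x y).trans_eq (by ring)
  · by_cases hj : Even j
    · have hj' : ¬ Even (j + 1) := by simpa [Int.even_add_one] using hj
      simp only [hj, hj', if_true, if_false]
      rw [hVW _ (hpos _) (Or.inl hx₂), h100]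
      congr 1; ring
    · have hj' : Even (j + 1) := by simpa [Int.even_add_one] using hj
      simp only [hj, hj', if_true, if_false]
      rw [hVW' _ (hpos _) (by rwa [← h100]), h100]
      congr 1; ring
  · dsimp only
    split_ifs
    · exact hWψ _ (by positivity) ⟨hx, le_trans (by linarith [hpos j]) hjx⟩
    · exact (hVW _ (hpos j) (Or.inr ⟨hx, hjx⟩)).trans
        (hWψ _ (by positivity) ⟨hx, le_trans (by linarith [hpos j]) hjx⟩)

noncomputable def selectScale (v : ℤ → X → E) (x : X) : E := v (Int.log 100 (dist x x₀)) x

lemma IsScaleFamily.dist_selectScale_le {K : ℝ} {v : ℤ → X → E} (hv : IsScaleFamily x₀ K v)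
    {x y : X} (hyx : dist y x₀ ≤ dist x x₀) (hxy : 4 * dist x y < dist x x₀) :
    dist y x₀ * dist (selectScale x₀ v x) (selectScale x₀ v y) ≤ 100 * K * dist x y := by
  set k := Int.log 100 (dist x x₀)
  have hy : 3 / 4 * dist x x₀ < dist y x₀ := by linarith [dist_triangle x y x₀]
  have hy₀ : 0 < dist y x₀ := by linarith [dist_nonneg (x := x) (y := x₀)]
  have hρx : (100 : ℝ) ^ k ≤ dist x x₀ := by
    exact_mod_cast Int.zpow_log_le_self (b := 100) (by norm_num) (hy₀.trans_le hyx)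
  have hxρ : dist x x₀ < 100 * 100 ^ k := by
    have := Int.lt_zpow_succ_log_self (b := 100) (by norm_num) (dist x x₀)
    rwa [zpow_add_one₀ (by norm_num), mul_comm] at this
  have hρ : (0 : ℝ) < 100 ^ k := by positivity
  -- `y` lies at scale `k` or `k - 1`, and in the latter case in the window where `v (k - 1) = v k`
  have hsel : selectScale x₀ v y = v k y ∧ dist y x₀ ≤ 100 * 100 ^ k := by
    have hle : Int.log 100 (dist y x₀) ≤ k := Int.log_mono_right hy₀ hyx
    have hge : k - 1 ≤ Int.log 100 (dist y x₀) := by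
      rw [← Int.zpow_le_iff_le_log (by norm_num) hy₀, zpow_sub_one₀ (by norm_num)]
      push_cast; linarith
    rcases (show Int.log 100 (dist y x₀) = k ∨ Int.log 100 (dist y x₀) = k - 1 by omega)
      with hk | hk
    · exact ⟨by rw [selectScale, hk], by linarith⟩
    · have hyρ : dist y x₀ < 100 ^ k := by
        have := Int.lt_zpow_succ_log_self (b := 100) (by norm_num) (dist y x₀)
        rwa [hk, sub_add_cancel] at this
      refine ⟨?_, by linarith⟩
      rw [selectScale, hk, hv.eq_succ, sub_add_cancel] <;> rw [sub_add_cancel] <;> linarith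
  calc dist y x₀ * dist (selectScale x₀ v x) (selectScale x₀ v y)
      = dist y x₀ * dist (v k x) (v k y) := by rw [hsel.1]; rfl
    _ ≤ 100 * 100 ^ k * (K / 100 ^ k * dist x y) := by
      gcongr
      exacts [hsel.2, hv.dist_le k x y]
    _ = 100 * K * dist x y := by field_simp

end SphereExtensor

theorem stmt_4_general {X : Type*} [MetricSpace X] (x₀ : X) (m : ℕ)
    (hext : ∃ C > (0 : ℝ), ∀ lam > (0 : ℝ), ∀ (B : Set X)
        (u : B → Metric.sphere (0 : EuclideanSpace ℝ (Fin (m + 1))) 1),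
        (∀ x y : B, dist (u x) (u y) ≤ lam * dist (x : X) (y : X)) →
        ∃ v : X → Metric.sphere (0 : EuclideanSpace ℝ (Fin (m + 1))) 1,
          (∀ b : B, v (b : X) = u b) ∧ ∀ x y : X, dist (v x) (v y) ≤ C * lam * dist x y)
    (A : Set X) (f : A → EuclideanSpace ℝ (Fin (m + 1)))
    (hnorm : ∀ a : A, ‖f a‖ = dist (a : X) x₀) (hf : LipFun f) :
    ∃ F : X → EuclideanSpace ℝ (Fin (m + 1)),
      (∀ a : A, F (a : X) = f a) ∧ (∀ x : X, ‖F x‖ = dist x x₀) ∧ LipFun F := by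
  obtain ⟨C, -, hext⟩ := hext
  obtain ⟨lam, hlam, hf⟩ := hf
  obtain ⟨ψ, hψ, hψL, hψf⟩ := exists_direction x₀ hnorm hf
  have hX := (SphereLipExtensor.of_sphere hext).mono (le_max_left C 1)
  obtain ⟨v, hv, hvψ⟩ := hX.exists_isScaleFamily x₀ (le_max_right C 1) (K := 2 * lam + 1)
    (by linarith) hψ
    (fun s hs x hx y hy hsx hsy => (hψL s hs x hx y hy hsx hsy).trans (by gcongr; linarith))
  refine ⟨fun x => dist x x₀ • selectScale x₀ v x, fun a => ?_, fun x => ?_,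
    lipFun_smul_of_dist_le x₀ (fun x => hv.norm_eq_one _ x)
      (fun x y => hv.dist_selectScale_le x₀)⟩
  · change dist (a : X) x₀ • _ = _
    rw [← hψf a]
    rcases (dist_nonneg : 0 ≤ dist (a : X) x₀).eq_or_lt with h₀ | h₀
    · rw [← h₀, zero_smul, zero_smul]
    · rw [selectScale, hvψ _ a a.2]
      exact_mod_cast Int.zpow_log_le_self (b := 100) (by norm_num) h₀
  · simp [norm_smul, selectScale, hv.norm_eq_one]

/-- if the sphere `Sᵐ` is a Lipschitz extensor of the pointed discrete metric
space `X`, then every norm-preserving Lipschitz function `f : A → ℝ^{m+1}`, `A ⊂ X`, extends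
to a norm-preserving Lipschitz function `X → ℝ^{m+1}`. -/
theorem stmt_4 {X : Type*} [MetricSpace X] (x₀ : X)
    (hdisc : ∃ ε > 0, ∀ x y : X, x ≠ y → ε ≤ dist x y) (m : ℕ)
    (hext : ∃ C > (0 : ℝ), ∀ lam > (0 : ℝ), ∀ (B : Set X)
        (u : B → Metric.sphere (0 : EuclideanSpace ℝ (Fin (m + 1))) 1),
        (∀ x y : B, dist (u x) (u y) ≤ lam * dist (x : X) (y : X)) →
        ∃ v : X → Metric.sphere (0 : EuclideanSpace ℝ (Fin (m + 1))) 1,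
          (∀ b : B, v (b : X) = u b) ∧ ∀ x y : X, dist (v x) (v y) ≤ C * lam * dist x y)
    (A : Set X) (f : A → EuclideanSpace ℝ (Fin (m + 1)))
    (hnorm : ∀ a : A, ‖f a‖ = dist (a : X) x₀) (hf : LipFun f) :
    ∃ F : X → EuclideanSpace ℝ (Fin (m + 1)),
      (∀ a : A, F (a : X) = f a) ∧ (∀ x : X, ‖F x‖ = dist x x₀) ∧ LipFun F :=
  stmt_4_general x₀ m hext A f hnorm hf
end

section
/- Let K ⊂ ℝ^p ∖ {0} and L ⊂ ℝ^q ∖ {0} be compact sets such that each ray from the origin meets K (respectively L) in at most one point, and suppose K is regular. If f : K → L is a Lipschitz map, then the map f' : OpenCone(K) → OpenCone(L) defined by f'(t·k) = t·f(k) for t ≥ 0, k ∈ K, is Lipschitz. In particular, if f : K → L is a bi-Lipschitz homeomorphism of regular sets, then f' is a bi-Lipschitz homeomorphism. -/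
/-- The open cone over a set `K ⊂ ℝ^p`: all nonnegative multiples of points of `K`. -/
def OpenCone {p : ℕ} (K : Set (EuclideanSpace ℝ (Fin p))) : Set (EuclideanSpace ℝ (Fin p)) :=
  {y | ∃ t : ℝ, 0 ≤ t ∧ ∃ k ∈ K, y = t • k}

/-- Each ray from the origin meets `K` in at most one point. -/
def RayUnique {p : ℕ} (K : Set (EuclideanSpace ℝ (Fin p))) : Prop :=
  ∀ k₁ ∈ K, ∀ k₂ ∈ K, ∀ t : ℝ, 0 < t → k₂ = t • k₁ → k₂ = k₁

/-- `K` is *regular*: every `x ∈ K` has a closed neighborhood `A` in `K` and `α > 0` such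
that every normalized "tangent" vector `(v-w)/‖v-w‖`, `v ≠ w ∈ A`, is at distance `> α`
from every positive multiple `t·x/‖x‖`. -/
def RegularSet {p : ℕ} (K : Set (EuclideanSpace ℝ (Fin p))) : Prop :=
  ∀ x ∈ K, ∃ A : Set (EuclideanSpace ℝ (Fin p)),
    A ⊆ K ∧ IsClosed A ∧ A ∈ nhdsWithin x K ∧
    ∃ α > (0 : ℝ), ∀ v ∈ A, ∀ w ∈ A, v ≠ w → ∀ t : ℝ, 0 < t →
      α < ‖(‖v - w‖⁻¹ • (v - w)) - t • (‖x‖⁻¹ • x)‖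

/-!
Everything rests on the estimate `|s - t| ≤ c * ‖s • k - t • l‖` for `k, l ∈ K` and `s, t ≥ 0`,
i.e. on the radial coordinate of the cone being Lipschitz. Given it, writing
`s • f k - t • f l = s • (f k - f l) + (s - t) • f l` bounds the cone map by
`λ * ‖s • k - t • l‖ + C * |s - t|`, and symmetrically for the inverse when `L` is regular.

The estimate is proved on the compact set of triples `(k, l, σ)`, `σ ∈ [0, 1]`, normalized by
`s + t = 1`. Where `σ • k - (1 - σ) • l ≠ 0` continuity gives it; by ray uniqueness this vector
vanishes only for `k = l`, `σ = 1/2`. Near such a point `x`, regularity says that chords of `K` stay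
away from the direction of `x`, so the components of `s • k - t • l` along `x` and orthogonal to
`x` together control `|s - t|`.
-/

open Set Filter Topology RealInnerProductSpace

theorem abs_sub_le_mul_norm_smul_sub_smul_of_starProjection {E : Type*} [NormedAddCommGroup E]
    [InnerProductSpace ℝ E] {u : E} (hu : ‖u‖ = 1) {A : Set E} {α ρ : ℝ} (hα : 0 < α)
    (hρ : 0 < ρ) (hA : ∀ v ∈ A, ∀ w ∈ A, α * ‖v - w‖ ≤ ‖(ℝ ∙ u)ᗮ.starProjection (v - w)‖)
    (hAu : ∀ l ∈ A, ρ ≤ ⟪u, l⟫)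
    (hAP : ∀ l ∈ A, ‖(ℝ ∙ u)ᗮ.starProjection l‖ ≤ α * ρ / 2)
    {k l : E} (hk : k ∈ A) (hl : l ∈ A) (s t : ℝ) :
    |s - t| ≤ 2 * (α + 1) / (α * ρ) * ‖s • k - t • l‖ := by
  set P := (ℝ ∙ u)ᗮ.starProjection
  set N := ‖s • k - t • l‖
  have hnormal : α * (|s| * ‖k - l‖) ≤ N + |s - t| * (α * ρ / 2) :=
    calc α * (|s| * ‖k - l‖) = |s| * (α * ‖k - l‖) := by ring
      _ ≤ |s| * ‖P (k - l)‖ := by gcongr; exact hA k hk l hl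
      _ = ‖P (s • k - t • l) - (s - t) • P l‖ := by
        rw [← Real.norm_eq_abs, ← norm_smul, ← map_smul, ← map_smul, ← map_sub]
        congr 2; module
      _ ≤ ‖P (s • k - t • l)‖ + |s - t| * ‖P l‖ := by
        rw [← Real.norm_eq_abs, ← norm_smul]; exact norm_sub_le _ _
      _ ≤ N + |s - t| * (α * ρ / 2) := by
        gcongr
        · exact Submodule.norm_starProjection_apply_le _ _
        · exact hAP l hl
  have hradial : |s - t| * ρ ≤ N + |s| * ‖k - l‖ :=
    calc |s - t| * ρ ≤ |s - t| * ⟪u, l⟫ := by gcongr; exact hAu l hl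
      _ = |⟪u, s • k - t • l⟫ - s * ⟪u, k - l⟫| := by
        rw [← abs_of_pos (hρ.trans_le (hAu l hl)), ← abs_mul]
        congr 1
        simp only [inner_sub_right, inner_smul_right]
        ring
      _ ≤ |⟪u, s • k - t • l⟫| + |s| * |⟪u, k - l⟫| := by
        rw [← abs_mul]; exact abs_sub _ _
      _ ≤ N + |s| * ‖k - l‖ := by
        gcongr <;> exact (abs_real_inner_le_norm _ _).trans_eq (by rw [hu, one_mul])
  rw [div_mul_eq_mul_div, le_div_iff₀ (by positivity)]
  nlinarith [abs_nonneg s, norm_nonneg (k - l)]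

theorem RegularSet.exists_mul_norm_sub_le_norm_starProjection {p : ℕ}
    {K : Set (EuclideanSpace ℝ (Fin p))} (hK : RegularSet K) {x : EuclideanSpace ℝ (Fin p)}
    (hx : x ∈ K) :
    ∃ A ∈ 𝓝[K] x, ∃ α > 0, ∀ v ∈ A, ∀ w ∈ A,
      α * ‖v - w‖ ≤ ‖(ℝ ∙ (‖x‖⁻¹ • x))ᗮ.starProjection (v - w)‖ := by
  obtain ⟨A, -, -, hA, α, hα, hsep⟩ := hK x hx
  set u := ‖x‖⁻¹ • x
  clear_value u
  refine ⟨A, hA, min α 1, by positivity, fun v hv w hw => ?_⟩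
  rcases eq_or_ne v w with rfl | hvw
  · simp
  have hvw₀ : 0 < ‖v - w‖ := norm_pos_iff.2 (sub_ne_zero.2 hvw)
  set e := ‖v - w‖⁻¹ • (v - w)
  have hfar : ∀ r : ℝ, min α 1 ≤ ‖e - r • u‖ := by
    intro r
    rcases lt_trichotomy r 0 with hr | rfl | hr
    · have h := hsep w hw v hv hvw.symm (-r) (neg_pos.2 hr)
      have he : ‖w - v‖⁻¹ • (w - v) - (-r) • u = -(e - r • u) := by
        rw [norm_sub_rev]; module
      rw [he, norm_neg] at h
      exact (min_le_left _ _).trans h.le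
    · simp [e, norm_smul, hvw₀.ne']
    · exact (min_le_left _ _).trans (hsep v hv w hw hvw r hr).le
  obtain ⟨r, hr⟩ := Submodule.mem_span_singleton.1 ((ℝ ∙ u).starProjection_apply_mem (v - w))
  have hP : (ℝ ∙ u)ᗮ.starProjection (v - w) = ‖v - w‖ • (e - (r / ‖v - w‖) • u) := by
    rw [Submodule.starProjection_orthogonal_val, ← hr, smul_sub, smul_smul, smul_smul,
      mul_inv_cancel₀ hvw₀.ne', mul_div_cancel₀ _ hvw₀.ne', one_smul]
  calc min α 1 * ‖v - w‖ ≤ ‖v - w‖ * ‖e - (r / ‖v - w‖) • u‖ := by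
        rw [mul_comm]; gcongr; exact hfar _
    _ = _ := by rw [hP, norm_smul, Real.norm_of_nonneg (norm_nonneg _)]

theorem RegularSet.exists_nhdsWithin_abs_sub_le_mul_norm_smul_sub_smul {p : ℕ}
    {K : Set (EuclideanSpace ℝ (Fin p))} (hK : RegularSet K) {x : EuclideanSpace ℝ (Fin p)}
    (hx : x ∈ K) (hx0 : x ≠ 0) :
    ∃ U ∈ 𝓝[K] x, ∃ c : ℝ, ∀ k ∈ U, ∀ l ∈ U, ∀ s t : ℝ, |s - t| ≤ c * ‖s • k - t • l‖ := by
  obtain ⟨A, hA, α, hα, hAP⟩ := hK.exists_mul_norm_sub_le_norm_starProjection hx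
  set u := ‖x‖⁻¹ • x
  have hxpos : 0 < ‖x‖ := norm_pos_iff.2 hx0
  have hu : ‖u‖ = 1 := by simp [u, norm_smul, hxpos.ne']
  have hxu : ‖x‖ • u = x := by simp [u, smul_smul, hxpos.ne']
  clear_value u
  set P := (ℝ ∙ u)ᗮ.starProjection
  set ε := min (‖x‖ / 2) (α * ‖x‖ / 4)
  have hε : 0 < ε := by positivity
  have hinner : ∀ l ∈ Metric.ball x ε, ‖x‖ / 2 ≤ ⟪u, l⟫ := by
    intro l hl
    have hlx : ‖l - x‖ < ‖x‖ / 2 := (mem_ball_iff_norm.1 hl).trans_le (min_le_left _ _)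
    have hux : ⟪u, x⟫ = ‖x‖ := by
      nth_rw 1 [← hxu]
      rw [inner_smul_right, real_inner_self_eq_norm_sq, hu, one_pow, mul_one]
    have := (abs_le.1 ((abs_real_inner_le_norm u (l - x)).trans_eq (by rw [hu, one_mul]))).1
    rw [inner_sub_right, hux] at this
    linarith
  have hPx : P x = 0 := by
    rw [← hxu, map_smul, Submodule.starProjection_orthogonalComplement_singleton_eq_zero,
      smul_zero]
  have hproj : ∀ l ∈ Metric.ball x ε, ‖P l‖ ≤ α * (‖x‖ / 2) / 2 := fun l hl =>
    calc ‖P l‖ = ‖P (l - x)‖ := by rw [map_sub, hPx, sub_zero]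
      _ ≤ ‖l - x‖ := Submodule.norm_starProjection_apply_le _ _
      _ ≤ α * (‖x‖ / 2) / 2 := by
        linarith [(mem_ball_iff_norm.1 hl).le.trans (min_le_right (‖x‖ / 2) (α * ‖x‖ / 4))]
  refine ⟨A ∩ Metric.ball x ε,
    inter_mem hA (mem_nhdsWithin_of_mem_nhds (Metric.ball_mem_nhds x hε)), _,
    fun k hk l hl s t => abs_sub_le_mul_norm_smul_sub_smul_of_starProjection hu hα
      (half_pos hxpos) (fun v hv w hw => hAP v hv.1 w hw.1) (fun l hl => hinner l hl.2)
      (fun l hl => hproj l hl.2) hk hl s t⟩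

theorem IsCompact.exists_forall_of_forall_eventually {X : Type*} [TopologicalSpace X]
    {S : Set X} (hS : IsCompact S) {P : ℝ → X → Prop}
    (hmono : ∀ ⦃c c' : ℝ⦄, c ≤ c' → ∀ x, P c x → P c' x)
    (hloc : ∀ x ∈ S, ∃ c, ∀ᶠ y in 𝓝[S] x, P c y) :
    ∃ c, ∀ x ∈ S, P c x := by
  refine hS.induction_on (p := fun B => ∃ c, ∀ x ∈ B, P c x) ⟨0, by simp⟩
    (fun B B' hBB' ⟨c, hc⟩ => ⟨c, fun x hx => hc x (hBB' hx)⟩) ?_ fun x hx => ?_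
  · rintro B B' ⟨c, hc⟩ ⟨c', hc'⟩
    exact ⟨max c c', fun x hx => hx.elim (fun h => hmono (le_max_left _ _) x (hc x h))
      fun h => hmono (le_max_right _ _) x (hc' x h)⟩
  · obtain ⟨c, hc⟩ := hloc x hx
    exact ⟨_, hc, c, fun _ hy => hy⟩

theorem RayUnique.eq_of_smul_eq_smul {p : ℕ} {K : Set (EuclideanSpace ℝ (Fin p))}
    (hK : RayUnique K) (hK0 : (0 : EuclideanSpace ℝ (Fin p)) ∉ K) {s t : ℝ} (hs : 0 ≤ s)
    (ht : 0 ≤ t) {k l : EuclideanSpace ℝ (Fin p)} (hk : k ∈ K) (hl : l ∈ K)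
    (h : s • k = t • l) : s = t ∧ (s = 0 ∨ k = l) := by
  have hk0 : k ≠ 0 := ne_of_mem_of_not_mem hk hK0
  have hl0 : l ≠ 0 := ne_of_mem_of_not_mem hl hK0
  rcases hs.eq_or_lt with rfl | hs
  · rw [zero_smul, eq_comm, smul_eq_zero] at h
    exact ⟨(h.resolve_right hl0).symm, Or.inl rfl⟩
  rcases ht.eq_or_lt with rfl | ht
  · rw [zero_smul, smul_eq_zero] at h
    exact absurd (h.resolve_right hk0) hs.ne'
  obtain rfl : l = k := hK k hk l hl (s / t) (div_pos hs ht) <| by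
    rw [div_eq_inv_mul, mul_smul, h, inv_smul_smul₀ ht.ne']
  exact ⟨smul_left_injective ℝ hk0 h, Or.inr rfl⟩

theorem abs_sub_le_mul_norm_smul_sub_smul_of_forall_Icc {E : Type*}
    [SeminormedAddCommGroup E] [NormedSpace ℝ E] {k l : E} {c : ℝ}
    (h : ∀ σ ∈ Icc (0 : ℝ) 1, |σ - (1 - σ)| ≤ c * ‖σ • k - (1 - σ) • l‖) {s t : ℝ}
    (hs : 0 ≤ s) (ht : 0 ≤ t) : |s - t| ≤ c * ‖s • k - t • l‖ := by
  rcases (add_nonneg hs ht).eq_or_lt with hst | hst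
  · obtain rfl : s = 0 := by linarith
    obtain rfl : t = 0 := by linarith
    simp
  have hσ : s / (s + t) ∈ Icc (0 : ℝ) 1 := ⟨by positivity, div_le_one_of_le₀ (by linarith) hst.le⟩
  have hτ : 1 - s / (s + t) = t / (s + t) := by field_simp; ring
  have hscale : s • k - t • l = (s + t) • ((s / (s + t)) • k - (t / (s + t)) • l) := by
    rw [smul_sub, smul_smul, smul_smul, mul_div_cancel₀ _ hst.ne', mul_div_cancel₀ _ hst.ne']
  calc |s - t| = (s + t) * |s / (s + t) - t / (s + t)| := by
        rw [div_sub_div_same, abs_div, abs_of_pos hst, mul_div_cancel₀ _ hst.ne']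
    _ ≤ (s + t) * (c * ‖(s / (s + t)) • k - (t / (s + t)) • l‖) := by
        gcongr; rw [← hτ]; exact h _ hσ
    _ = c * ‖s • k - t • l‖ := by
        rw [hscale, norm_smul, Real.norm_of_nonneg hst.le]; ring

theorem RegularSet.exists_abs_sub_le_mul_norm_smul_sub_smul {p : ℕ}
    {K : Set (EuclideanSpace ℝ (Fin p))} (hKreg : RegularSet K) (hKc : IsCompact K)
    (hK0 : (0 : EuclideanSpace ℝ (Fin p)) ∉ K) (hKray : RayUnique K) :
    ∃ c, 0 ≤ c ∧ ∀ k ∈ K, ∀ l ∈ K, ∀ s t : ℝ, 0 ≤ s → 0 ≤ t →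
      |s - t| ≤ c * ‖s • k - t • l‖ := by
  set S := (K ×ˢ K) ×ˢ Icc (0 : ℝ) 1
  set F : (EuclideanSpace ℝ (Fin p) × EuclideanSpace ℝ (Fin p)) × ℝ → ℝ :=
    fun z => ‖z.2 • z.1.1 - (1 - z.2) • z.1.2‖
  have hF : Continuous F := by fun_prop
  obtain ⟨c, hc⟩ : ∃ c, ∀ z ∈ S, |z.2 - (1 - z.2)| ≤ c * F z := by
    refine ((hKc.prod hKc).prod isCompact_Icc).exists_forall_of_forall_eventually
      (fun c c' hcc' z h => h.trans (mul_le_mul_of_nonneg_right hcc' (norm_nonneg _))) ?_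
    rintro ⟨⟨x, y⟩, σ⟩ ⟨⟨hx, hy⟩, hσ₀, hσ₁⟩
    by_cases hFz : F ((x, y), σ) = 0
    · obtain rfl : x = y := by
        obtain ⟨hσ, hxy⟩ := hKray.eq_of_smul_eq_smul hK0 hσ₀ (by linarith) hx hy
          (sub_eq_zero.1 (norm_eq_zero.1 hFz))
        exact hxy.resolve_left (by linarith)
      obtain ⟨U, hU, c, hc⟩ :=
        hKreg.exists_nhdsWithin_abs_sub_le_mul_norm_smul_sub_smul hx (ne_of_mem_of_not_mem hx hK0)
      have h₁ : Tendsto (fun z => z.1.1) (𝓝[S] ((x, x), σ)) (𝓝[K] x) :=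
        (continuous_fst.comp continuous_fst).continuousWithinAt.tendsto_nhdsWithin
          fun z hz => hz.1.1
      have h₂ : Tendsto (fun z => z.1.2) (𝓝[S] ((x, x), σ)) (𝓝[K] x) :=
        (continuous_snd.comp continuous_fst).continuousWithinAt.tendsto_nhdsWithin
          fun z hz => hz.1.2
      exact ⟨c, ((h₁.eventually hU).and (h₂.eventually hU)).mono fun z hz =>
        hc _ hz.1 _ hz.2 _ _⟩
    · have hFpos : 0 < F ((x, y), σ) := lt_of_le_of_ne (norm_nonneg _) (Ne.symm hFz)
      refine ⟨2 / F ((x, y), σ), ?_⟩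
      filter_upwards [self_mem_nhdsWithin, mem_nhdsWithin_of_mem_nhds
        (hF.continuousAt.eventually (lt_mem_nhds (half_lt_self hFpos)))] with z hz hFz'
      have : |z.2 - (1 - z.2)| ≤ 1 := abs_le.2 ⟨by linarith [hz.2.1], by linarith [hz.2.2]⟩
      rw [div_mul_eq_mul_div, le_div_iff₀ hFpos]
      linarith [mul_le_mul_of_nonneg_right this hFpos.le]
  refine ⟨max c 0, le_max_right _ _, fun k hk l hl s t hs ht =>
    abs_sub_le_mul_norm_smul_sub_smul_of_forall_Icc (fun σ hσ => ?_) hs ht⟩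
  exact (hc ((k, l), σ) ⟨⟨hk, hl⟩, hσ⟩).trans
    (mul_le_mul_of_nonneg_right (le_max_left _ _) (norm_nonneg _))

theorem RayUnique.exists_smul_extension {p : ℕ} {K : Set (EuclideanSpace ℝ (Fin p))}
    (hK : RayUnique K) (hK0 : (0 : EuclideanSpace ℝ (Fin p)) ∉ K) {F : Type*} [AddCommGroup F]
    [Module ℝ F] (f : EuclideanSpace ℝ (Fin p) → F) :
    ∃ g : EuclideanSpace ℝ (Fin p) → F, ∀ t : ℝ, 0 ≤ t → ∀ k ∈ K, g (t • k) = t • f k := by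
  let φ : Ici (0 : ℝ) × K → EuclideanSpace ℝ (Fin p) := fun q => (q.1 : ℝ) • (q.2 : _)
  have hφ : (fun q : Ici (0 : ℝ) × K => (q.1 : ℝ) • f q.2).FactorsThrough φ := by
    rintro ⟨⟨s, hs⟩, ⟨k, hk⟩⟩ ⟨⟨t, ht⟩, ⟨l, hl⟩⟩ h
    obtain ⟨rfl, rfl | rfl⟩ := hK.eq_of_smul_eq_smul hK0 hs ht hk hl h <;> simp
  exact ⟨Function.extend φ _ 0, fun t ht k hk => hφ.extend_apply 0 (⟨t, ht⟩, ⟨k, hk⟩)⟩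

section SmulSub

variable {E F : Type*} [SeminormedAddCommGroup E] [NormedSpace ℝ E] [SeminormedAddCommGroup F]
  [NormedSpace ℝ F] {s t : ℝ}

theorem norm_smul_sub_smul_le_s7 (hs : 0 ≤ s) (x y : E) :
    ‖s • x - t • y‖ ≤ s * ‖x - y‖ + |s - t| * ‖y‖ :=
  calc ‖s • x - t • y‖ = ‖s • (x - y) + (s - t) • y‖ := by congr 1; module
    _ ≤ ‖s • (x - y)‖ + ‖(s - t) • y‖ := norm_add_le _ _
    _ = s * ‖x - y‖ + |s - t| * ‖y‖ := by
      rw [norm_smul, norm_smul, Real.norm_of_nonneg hs, Real.norm_eq_abs]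

theorem mul_norm_sub_le_norm_smul_sub_smul (hs : 0 ≤ s) (x y : E) :
    s * ‖x - y‖ ≤ ‖s • x - t • y‖ + |s - t| * ‖y‖ :=
  calc s * ‖x - y‖ = ‖s • (x - y)‖ := by rw [norm_smul, Real.norm_of_nonneg hs]
    _ = ‖(s • x - t • y) - (s - t) • y‖ := by congr 1; module
    _ ≤ ‖s • x - t • y‖ + ‖(s - t) • y‖ := norm_sub_le _ _
    _ = ‖s • x - t • y‖ + |s - t| * ‖y‖ := by rw [norm_smul, Real.norm_eq_abs]

theorem norm_smul_sub_smul_le_of_abs_sub_le {a b : E} {a' b' : F} {lam c M M' : ℝ}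
    (hs : 0 ≤ s) (hlam : 0 ≤ lam) (hab : ‖a - b‖ ≤ lam * ‖a' - b'‖) (hb : ‖b‖ ≤ M)
    (hb' : ‖b'‖ ≤ M') (hst : |s - t| ≤ c * ‖s • a' - t • b'‖) :
    ‖s • a - t • b‖ ≤ (lam + (lam * M' + M) * c) * ‖s • a' - t • b'‖ := by
  have hM : 0 ≤ lam * M' + M := by
    have := (norm_nonneg b).trans hb; have := (norm_nonneg b').trans hb'; positivity
  calc ‖s • a - t • b‖ ≤ s * ‖a - b‖ + |s - t| * ‖b‖ := norm_smul_sub_smul_le_s7 hs a b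
    _ ≤ lam * (s * ‖a' - b'‖) + |s - t| * M := by
        rw [mul_left_comm]; gcongr
    _ ≤ lam * (‖s • a' - t • b'‖ + |s - t| * M') + |s - t| * M := by
        gcongr
        exact (mul_norm_sub_le_norm_smul_sub_smul hs a' b').trans (by gcongr)
    _ = lam * ‖s • a' - t • b'‖ + (lam * M' + M) * |s - t| := by ring
    _ ≤ (lam + (lam * M' + M) * c) * ‖s • a' - t • b'‖ := by
        nlinarith [mul_le_mul_of_nonneg_left hst hM]

end SmulSub

/-- a Lipschitz map `f : K → L` of compact sets missing the origin and meeting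
each ray at most once, with `K` regular, induces a Lipschitz map
`f' : OpenCone(K) → OpenCone(L)`, `f'(t·k) = t·f(k)`; if moreover `L` is regular and `f` is a
bi-Lipschitz homeomorphism onto `L`, then `f'` is a bi-Lipschitz homeomorphism onto the cone. -/
theorem stmt_7 {p q : ℕ}
    (K : Set (EuclideanSpace ℝ (Fin p))) (L : Set (EuclideanSpace ℝ (Fin q)))
    (hKc : IsCompact K) (hK0 : (0 : EuclideanSpace ℝ (Fin p)) ∉ K) (hKray : RayUnique K)
    (hLc : IsCompact L) (hL0 : (0 : EuclideanSpace ℝ (Fin q)) ∉ L) (hLray : RayUnique L)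
    (hKreg : RegularSet K)
    (f : EuclideanSpace ℝ (Fin p) → EuclideanSpace ℝ (Fin q))
    (hfK : Set.MapsTo f K L)
    (hfLip : ∃ lam : ℝ, 0 ≤ lam ∧ ∀ v ∈ K, ∀ w ∈ K, ‖f v - f w‖ ≤ lam * ‖v - w‖) :
    ∃ g : EuclideanSpace ℝ (Fin p) → EuclideanSpace ℝ (Fin q),
      (∀ t : ℝ, 0 ≤ t → ∀ k ∈ K, g (t • k) = t • f k) ∧
      (∃ lam : ℝ, 0 ≤ lam ∧
        ∀ x ∈ OpenCone K, ∀ y ∈ OpenCone K, ‖g x - g y‖ ≤ lam * ‖x - y‖) ∧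
      ((RegularSet L ∧ Set.BijOn f K L ∧
          (∃ mu : ℝ, 0 ≤ mu ∧ ∀ v ∈ K, ∀ w ∈ K, ‖v - w‖ ≤ mu * ‖f v - f w‖)) →
        (Set.BijOn g (OpenCone K) (OpenCone L) ∧
          ∃ mu : ℝ, 0 ≤ mu ∧
            ∀ x ∈ OpenCone K, ∀ y ∈ OpenCone K, ‖x - y‖ ≤ mu * ‖g x - g y‖)) := by
  obtain ⟨lam, hlam0, hlam⟩ := hfLip
  obtain ⟨g, hg⟩ := hKray.exists_smul_extension hK0 f
  obtain ⟨MK, hMK0, hMK⟩ := hKc.isBounded.exists_pos_norm_le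
  obtain ⟨ML, hML0, hML⟩ := hLc.isBounded.exists_pos_norm_le
  obtain ⟨cK, hcK0, hcK⟩ := hKreg.exists_abs_sub_le_mul_norm_smul_sub_smul hKc hK0 hKray
  refine ⟨g, hg, ⟨lam + (lam * MK + ML) * cK, by positivity, ?_⟩, ?_⟩
  · rintro _ ⟨s, hs, k, hk, rfl⟩ _ ⟨t, ht, l, hl, rfl⟩
    rw [hg s hs k hk, hg t ht l hl]
    exact norm_smul_sub_smul_le_of_abs_sub_le hs hlam0 (hlam k hk l hl) (hML _ (hfK hl))
      (hMK l hl) (hcK k hk l hl s t hs ht)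
  rintro ⟨hLreg, hfbij, mu, hmu0, hmu⟩
  obtain ⟨cL, hcL0, hcL⟩ := hLreg.exists_abs_sub_le_mul_norm_smul_sub_smul hLc hL0 hLray
  have hinv : ∀ x ∈ OpenCone K, ∀ y ∈ OpenCone K,
      ‖x - y‖ ≤ (mu + (mu * ML + MK) * cL) * ‖g x - g y‖ := by
    rintro _ ⟨s, hs, k, hk, rfl⟩ _ ⟨t, ht, l, hl, rfl⟩
    rw [hg s hs k hk, hg t ht l hl]
    exact norm_smul_sub_smul_le_of_abs_sub_le hs hmu0 (hmu k hk l hl) (hMK l hl)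
      (hML _ (hfK hl)) (hcL _ (hfK hk) _ (hfK hl) s t hs ht)
  refine ⟨⟨?_, fun x hx y hy hxy => ?_, ?_⟩, _, by positivity, hinv⟩
  · rintro _ ⟨s, hs, k, hk, rfl⟩
    exact ⟨s, hs, f k, hfK hk, hg s hs k hk⟩
  · simpa [hxy, sub_eq_zero] using hinv x hx y hy
  · rintro _ ⟨t, ht, l, hl, rfl⟩
    obtain ⟨k, hk, rfl⟩ := hfbij.surjOn hl
    exact ⟨t • k, ⟨t, ht, k, hk, rfl⟩, hg t ht k hk⟩
end
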